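/- arXiv:1207.0473 — 3 statements merged into one kernel-verified Lean document; each statement's English description precedes it below -/
import Mathlib

section
/- Consider the separable nonlinear regression model y_i = β₀ᵀ h(x_i, α₀) + e_i, i = 1,2,..., where (x_i, e_i) are i.i.d., x_i ∈ ℝ^q is independent of e_i ∈ ℝ, α₀ ∈ A ⊂ ℝ^{p₁}, β₀ ∈ B ⊂ ℝ^{p₂}, and h: ℝ^q × A → ℝ^{p₂} is jointly measurable. Let ρ be a ρ-function and let (α̂_n, β̂_n) ∈ A × B be any sequence of measurable minimizers of λ_n(α, β) = (1/n) Σ_{i=1}^n ρ(y_i − βᵀ h(x_i, α)) over A × B. Assume A is compact, and assume: (A) B is closed and tβ ∈ B for all β ∈ B, t > 0; (B) sup_{α ∈ A} E|ρ(y − βᵀh(x,α))| < ∞ for all β ∈ B; (C) t ↦ E ρ(e − t) has a unique minimum at t = 0, with minimum value λ₀ = Eρ(e); (D) h is continuous in α almost surely and for every α ≠ α₀, sup_{β ∈ B} P{βᵀh(x,α) = β₀ᵀh(x,α₀)} < 1; (E) δ := sup_{β ≠ 0, α ∈ A} P(βᵀh(x,α) = 0) < 1 − λ₀/S where S = sup_t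 ρ(t) (possibly infinite, in which case the condition reads δ < 1). Then there exists a finite constant T₀ such that, with probability one, ‖β̂_n‖ ≤ T₀ for all sufficiently large n. -/
open MeasureTheory ProbabilityTheory Filter
open scoped RealInnerProductSpace ENNReal

/-- A ρ-function in the sense of Maronna et al. (2006): `ρ(u)` is a continuous
nondecreasing function of `|u|` with `ρ(0) = 0`, such that if
`ρ(u) < sup_v ρ(v)` and `0 ≤ u < v` then `ρ(u) < ρ(v)`. -/
def IsRhoFunction (ρ : ℝ → ℝ) : Prop :=
  Continuous ρ ∧ (∀ u, 0 ≤ ρ u) ∧ (∀ u, ρ (-u) = ρ u) ∧ ρ 0 = 0 ∧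
    MonotoneOn ρ (Set.Ici 0) ∧
    ∀ u v : ℝ, 0 ≤ u → u < v → (∃ w, ρ u < ρ w) → ρ u < ρ v

/-! If `‖β̂_n‖` were unbounded, the residuals `y_i - β̂_nᵀ h(x_i, α̂_n)` would blow up at every
`i` with `uᵀ h(x_i, α̂_n) ≠ 0`, where `u = β̂_n / ‖β̂_n‖`; by (E) this happens with probability at
least `1 - δ`, so the empirical loss would eventually exceed `S (1 - δ) > λ₀`, the limit of the
empirical loss at the true parameter. To make this uniform in `(u, α)`, which ranges over the
compact set `(B ∩ sphere 0 1) × A`, the loss at scale `‖β‖ ≥ k` is bounded below by a truncated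
minorant, whose infimum over a ball of radius `1 / k` (taken over a countable dense set, so that
it stays measurable) has, by Fatou, mean `> λ₀` for `k` large. Finitely many such balls cover
the compact set, and the strong law applies to each of them. -/

open Topology

namespace IsRhoFunction

variable {ρ : ℝ → ℝ}

protected theorem continuous (hρ : IsRhoFunction ρ) : Continuous ρ := hρ.1

theorem nonneg (hρ : IsRhoFunction ρ) (u : ℝ) : 0 ≤ ρ u := hρ.2.1 u

theorem le_of_abs_le (hρ : IsRhoFunction ρ) {s t : ℝ} (hst : |s| ≤ |t|) : ρ s ≤ ρ t := by
  obtain ⟨-, -, heven, -, hmono, -⟩ := hρ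
  have habs (u : ℝ) : ρ |u| = ρ u := by
    rcases abs_choice u with h | h <;> rw [h]
    exact heven u
  rw [← habs s, ← habs t]
  exact hmono (abs_nonneg s) ((abs_nonneg s).trans hst) hst

theorem eventually_lt (hρ : IsRhoFunction ρ) {c : ℝ}
    (hc : ENNReal.ofReal c < ⨆ t, ENNReal.ofReal (ρ t)) : ∀ᶠ r in atTop, c < ρ r := by
  obtain ⟨t₀, ht₀⟩ := lt_iSup_iff.1 hc
  filter_upwards [eventually_ge_atTop |t₀|] with r hr
  exact (ENNReal.ofReal_lt_ofReal_iff'.1 ht₀).1.trans_le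
    (hρ.le_of_abs_le ((abs_abs t₀).symm ▸ hr.trans (le_abs_self r)))

end IsRhoFunction

theorem exists_pos_ofReal_le_of_lt_mul {L S m : ℝ≥0∞} (hm : m ≠ ⊤) (h : L < S * m) :
    ∃ M : ℝ, 0 < M ∧ ENNReal.ofReal M ≤ S ∧ L < ENNReal.ofReal M * m := by
  have hm0 : m ≠ 0 := by rintro rfl; simp at h
  have hdiv := ENNReal.div_lt_iff (a := S) (c := L) (.inl hm0) (.inl hm)
  obtain ⟨M, -, hLM, hMS⟩ := ENNReal.lt_iff_exists_real_btwn.1 (hdiv.2 h)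
  exact ⟨M, ENNReal.ofReal_pos.1 (zero_le.trans_lt hLM), hMS.le,
    (ENNReal.div_lt_iff (.inl hm0) (.inl hm)).1 hLM⟩

theorem lt_mul_measure_compl_of_le {Ω : Type*} [MeasurableSpace Ω] {μ : Measure Ω}
    [IsProbabilityMeasure μ] {L S δ : ℝ≥0∞} (hL : L ≠ ⊤) (hS : S ≠ 0) (hδ : δ < 1 - L / S)
    {E : Set Ω} (hE : μ E ≤ δ) : L < S * μ Eᶜ := by
  have hcompl : 1 - μ E ≤ μ Eᶜ := by
    rw [tsub_le_iff_left, ← measure_univ (μ := μ)]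
    exact measure_univ_le_add_compl E
  rw [mul_comm, ← ENNReal.div_lt_iff (.inl hS) (.inr hL)]
  exact (lt_tsub_comm.1 hδ).trans_le ((tsub_le_tsub_left hE 1).trans hcompl)

theorem iSup_ofReal_ne_zero_of_lintegral_lt {Ω : Type*} [MeasurableSpace Ω] {μ : Measure Ω}
    {ρ : ℝ → ℝ} {f f' : Ω → ℝ}
    (h : ∫⁻ ω, ENNReal.ofReal (ρ (f ω)) ∂μ < ∫⁻ ω, ENNReal.ofReal (ρ (f' ω)) ∂μ) :
    (⨆ t, ENNReal.ofReal (ρ t)) ≠ 0 := fun hS => by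
  simp [ENNReal.iSup_eq_zero.1 hS] at h

section Minorant

variable {P X : Type*} (ρ : ℝ → ℝ) (M : ℝ) (g : P → X → ℝ) (r : X → ℝ)

noncomputable def lossMinorant (k : ℕ) (w : P) (a : X) : ℝ :=
  min (ρ (max (k * |g w a| - |r a|) 0)) M

variable {ρ M g r}

theorem lossMinorant_le_rho (hρ : IsRhoFunction ρ) {k : ℕ} {t : ℝ} (hkt : (k : ℝ) ≤ t)
    (w : P) (a : X) : lossMinorant ρ M g r k w a ≤ ρ (r a - t * g w a) := by
  refine (min_le_left _ _).trans (hρ.le_of_abs_le ?_)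
  have ht : 0 ≤ t := k.cast_nonneg.trans hkt
  calc |max (k * |g w a| - |r a|) 0| = max (k * |g w a| - |r a|) 0 :=
        abs_of_nonneg (le_max_right _ _)
    _ ≤ max (|t * g w a| - |r a|) 0 := by
        rw [abs_mul, abs_of_nonneg ht]
        gcongr
    _ ≤ |r a - t * g w a| := max_le (abs_sub_comm (t * g w a) (r a) ▸ abs_sub_abs_le_abs_sub _ _)
        (abs_nonneg _)

theorem continuousOn_lossMinorant [TopologicalSpace P] (hρ : Continuous ρ) {C : Set P} {a : X}
    (hg : ContinuousOn (g · a) C) (k : ℕ) : ContinuousOn (lossMinorant ρ M g r k · a) C := by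
  unfold lossMinorant
  fun_prop

theorem measurable_lossMinorant [MeasurableSpace X] (hρ : Continuous ρ)
    (hg : ∀ w, Measurable (g w)) (hr : Measurable r) (k : ℕ) (w : P) :
    Measurable (lossMinorant ρ M g r k w) := by
  have := hρ.measurable
  have := hg w
  unfold lossMinorant
  fun_prop

variable (ρ M g r) [PseudoMetricSpace P]

noncomputable def localMinorant (D : Set P) (k : ℕ) (z : P) (a : X) : ℝ :=
  ⨅ w : D, if dist (w : P) z ≤ (k : ℝ)⁻¹ then lossMinorant ρ M g r k w a else M

variable {ρ M g r} {D : Set P}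

theorem localMinorant_bddBelow (hρ : IsRhoFunction ρ) (hM : 0 ≤ M) (k : ℕ) (z : P) (a : X) :
    BddBelow (Set.range fun w : D =>
      if dist (w : P) z ≤ (k : ℝ)⁻¹ then lossMinorant ρ M g r k w a else M) := by
  refine ⟨0, Set.forall_mem_range.2 fun w => ?_⟩
  split_ifs
  exacts [le_min (hρ.nonneg _) hM, hM]

theorem localMinorant_nonneg (hρ : IsRhoFunction ρ) (hM : 0 ≤ M) (k : ℕ) (z : P) (a : X) :
    0 ≤ localMinorant ρ M g r D k z a :=
  Real.iInf_nonneg fun _ => by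
    split_ifs
    exacts [le_min (hρ.nonneg _) hM, hM]

theorem localMinorant_le (hρ : IsRhoFunction ρ) (hM : 0 ≤ M) (k : ℕ) (z : P) (a : X) :
    localMinorant ρ M g r D k z a ≤ M := by
  rcases isEmpty_or_nonempty D with hD | hD
  · rw [localMinorant, Real.iInf_of_isEmpty]
    exact hM
  obtain ⟨w⟩ := hD
  refine (ciInf_le (localMinorant_bddBelow hρ hM k z a) w).trans ?_
  split_ifs
  exacts [min_le_right _ _, le_rfl]

theorem measurable_localMinorant [MeasurableSpace X] [Countable D] (hρ : Continuous ρ)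
    (hg : ∀ w, Measurable (g w)) (hr : Measurable r) (k : ℕ) (z : P) :
    Measurable (localMinorant ρ M g r D k z) :=
  Measurable.iInf fun w => by
    split_ifs
    exacts [measurable_lossMinorant hρ hg hr k w, measurable_const]

theorem localMinorant_le_lossMinorant (hρ : IsRhoFunction ρ) (hM : 0 ≤ M) {C : Set P}
    (hDC : D ⊆ C) (hCD : C ⊆ closure D) {a : X} (hg : ContinuousOn (g · a) C) {k : ℕ}
    {z p : P} (hp : p ∈ C) (hpz : dist p z < (k : ℝ)⁻¹) :
    localMinorant ρ M g r D k z a ≤ lossMinorant ρ M g r k p a := by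
  have hp' : p ∈ closure (Metric.ball z (k : ℝ)⁻¹ ∩ D) :=
    Metric.isOpen_ball.inter_closure ⟨hpz, hCD hp⟩
  refine ContinuousWithinAt.closure_le (f := fun _ => localMinorant ρ M g r D k z a)
    (g := (lossMinorant ρ M g r k · a)) hp' continuousWithinAt_const
    ((continuousOn_lossMinorant hρ.continuous hg k p hp).mono (Set.inter_subset_right.trans hDC))
    fun w ⟨hwz, hwD⟩ => ?_
  refine (ciInf_le (localMinorant_bddBelow hρ hM k z a) ⟨w, hwD⟩).trans_eq ?_
  exact if_pos (Metric.mem_ball.1 hwz).le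

theorem tendsto_localMinorant (hρ : IsRhoFunction ρ) (hM : 0 < M)
    (hMS : ENNReal.ofReal M ≤ ⨆ t, ENNReal.ofReal (ρ t)) {C : Set P} (hDC : D ⊆ C)
    (hCD : C ⊆ closure D) {a : X} (hg : ContinuousOn (g · a) C) {z : P} (hz : z ∈ C)
    (hgz : g z a ≠ 0) :
    Tendsto (fun k => localMinorant ρ M g r D k z a) atTop (𝓝 M) := by
  have : Nonempty D := (closure_nonempty_iff.1 ⟨z, hCD hz⟩).to_subtype
  refine tendsto_order.2 ⟨fun c hc => ?_, fun c hc => Eventually.of_forall fun k =>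
    (localMinorant_le hρ hM.le k z a).trans_lt hc⟩
  obtain ⟨c', hcc', hc'M⟩ := exists_between hc
  obtain ⟨R, hR⟩ := eventually_atTop.1
    (hρ.eventually_lt (((ENNReal.ofReal_lt_ofReal_iff hM).2 hc'M).trans_le hMS))
  obtain ⟨ε, hε, hgε⟩ := Metric.continuousWithinAt_iff.1 (hg z hz) (|g z a| / 2)
    (by positivity)
  have hk_small : ∀ᶠ k : ℕ in atTop, (k : ℝ)⁻¹ < ε :=
    (tendsto_inv_atTop_zero.comp tendsto_natCast_atTop_atTop).eventually_lt_const hε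
  have hk_large : ∀ᶠ k : ℕ in atTop, R + |r a| ≤ k * (|g z a| / 2) :=
    (tendsto_natCast_atTop_atTop.atTop_mul_const (by positivity)).eventually_ge_atTop _
  filter_upwards [hk_small, hk_large] with k hk_small hk_large
  refine hcc'.trans_le (le_ciInf fun w => ?_)
  split_ifs with hw
  · have hgw : |g z a| / 2 ≤ |g w a| := by
      have := hgε (hDC w.2) (hw.trans_lt hk_small)
      rw [Real.dist_eq] at this
      linarith [abs_sub_abs_le_abs_sub (g z a) (g w a), abs_sub_comm (g w a) (g z a)]
    have hRw : R ≤ max (k * |g w a| - |r a|) 0 := by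
      refine le_max_of_le_left ?_
      nlinarith [mul_le_mul_of_nonneg_left hgw k.cast_nonneg]
    exact le_min (hR _ hRw).le hc'M.le
  · exact hc'M.le

end Minorant

section

variable {Ω X : Type*} [MeasurableSpace Ω] [MeasurableSpace X] {μ : Measure Ω}

theorem eventually_lt_lintegral_of_tendsto {F : ℕ → Ω → ℝ≥0∞} (hF : ∀ k, AEMeasurable (F k) μ)
    {s : Set Ω} (hs : NullMeasurableSet s μ) {c L : ℝ≥0∞}
    (hlim : ∀ᵐ ω ∂μ, ω ∈ s → Tendsto (F · ω) atTop (𝓝 c)) (hL : L < c * μ s) :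
    ∀ᶠ k in atTop, L < ∫⁻ ω, F k ω ∂μ := by
  refine eventually_lt_of_lt_liminf (hL.trans_le ?_)
  calc c * μ s = ∫⁻ _ in s, c ∂μ := (setLIntegral_const s c).symm
    _ ≤ ∫⁻ ω in s, liminf (F · ω) atTop ∂μ :=
        lintegral_mono_ae ((ae_restrict_iff'₀ hs).2 (hlim.mono fun ω h hω => (h hω).liminf_eq.ge))
    _ ≤ ∫⁻ ω, liminf (F · ω) atTop ∂μ := setLIntegral_le_lintegral s _
    _ ≤ liminf (fun k => ∫⁻ ω, F k ω ∂μ) atTop := lintegral_liminf_le' hF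

theorem ae_tendsto_average_comp {ξ : ℕ → Ω → X} (hiid : iIndepFun ξ μ)
    (hident : ∀ i, IdentDistrib (ξ i) (ξ 0) μ μ) {φ : X → ℝ} (hφ : Measurable φ)
    (hint : Integrable (fun ω => φ (ξ 0 ω)) μ) :
    ∀ᵐ ω ∂μ, Tendsto (fun n : ℕ => (∑ i ∈ Finset.range n, φ (ξ i ω)) / n) atTop
      (𝓝 (∫ ω, φ (ξ 0 ω) ∂μ)) :=
  strong_law_ae_real (fun i ω => φ (ξ i ω)) hint (fun _ _ hij => (hiid.indepFun hij).comp hφ hφ)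
    fun i => (hident i).comp hφ

end

section Consistency

variable {Ω X P : Type*} [MeasurableSpace Ω] {μ : Measure Ω} [IsProbabilityMeasure μ]
  [MeasurableSpace X] [PseudoMetricSpace P] {ρ : ℝ → ℝ} {M : ℝ} {g : P → X → ℝ} {r : X → ℝ}
  {D : Set P} [Countable D]

theorem integrable_localMinorant_comp (hρ : IsRhoFunction ρ) (hM : 0 ≤ M)
    (hg : ∀ w, Measurable (g w)) (hr : Measurable r) {ξ : Ω → X} (hξ : AEMeasurable ξ μ)
    (k : ℕ) (z : P) : Integrable (fun ω => localMinorant ρ M g r D k z (ξ ω)) μ :=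
  .of_bound ((measurable_localMinorant hρ.continuous hg hr k z).comp_aemeasurable
    hξ).aestronglyMeasurable M (ae_of_all _ fun ω => by
      rw [Real.norm_of_nonneg (localMinorant_nonneg hρ hM k z _)]
      exact localMinorant_le hρ hM k z _)

theorem exists_lt_integral_localMinorant (hρ : IsRhoFunction ρ) (hg : ∀ w, Measurable (g w))
    (hr : Measurable r) {C : Set P} (hDC : D ⊆ C) (hCD : C ⊆ closure D) {ξ : Ω → X}
    (hξ : AEMeasurable ξ μ) (hcont : ∀ᵐ ω ∂μ, ContinuousOn (g · (ξ ω)) C) {z : P} (hz : z ∈ C)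
    {c : ℝ} (hgap : ENNReal.ofReal c < (⨆ t, ENNReal.ofReal (ρ t)) * μ {ω | g z (ξ ω) ≠ 0}) :
    ∃ M : ℝ, 0 < M ∧ ∃ k : ℕ, 1 ≤ k ∧ c < ∫ ω, localMinorant ρ M g r D k z (ξ ω) ∂μ := by
  obtain ⟨M, hM, hMS, hcM⟩ := exists_pos_ofReal_le_of_lt_mul (measure_ne_top _ _) hgap
  have hlim : ∀ᶠ k in atTop,
      ENNReal.ofReal c < ∫⁻ ω, ENNReal.ofReal (localMinorant ρ M g r D k z (ξ ω)) ∂μ :=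
    eventually_lt_lintegral_of_tendsto
      (fun k => (ENNReal.measurable_ofReal.comp
        (measurable_localMinorant hρ.continuous hg hr k z)).comp_aemeasurable hξ)
      (((hg z).comp_aemeasurable hξ).nullMeasurableSet_preimage
        (measurableSet_singleton 0).compl)
      (hcont.mono fun ω hω hgz => (ENNReal.continuous_ofReal.tendsto M).comp
        (tendsto_localMinorant hρ hM hMS hDC hCD hω hz hgz)) hcM
  obtain ⟨k, hck, hk⟩ := (hlim.and (eventually_ge_atTop 1)).exists
  rw [← ofReal_integral_eq_lintegral_ofReal (integrable_localMinorant_comp hρ hM.le hg hr hξ k z)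
    (ae_of_all _ fun ω => localMinorant_nonneg hρ hM.le k z _)] at hck
  exact ⟨M, hM, k, hk, (ENNReal.ofReal_lt_ofReal_iff'.1 hck).1⟩

theorem exists_forall_sum_lt_sum_rho {ξ : ℕ → Ω → X} (hiid : iIndepFun ξ μ)
    (hident : ∀ i, IdentDistrib (ξ i) (ξ 0) μ μ) (hρ : IsRhoFunction ρ) {C : Set P}
    (hC : IsCompact C) (hg : ∀ w, Measurable (g w)) (hr : Measurable r)
    (hcont : ∀ᵐ ω ∂μ, ∀ i, ContinuousOn (g · (ξ i ω)) C) {ℓ : X → ℝ} (hℓ : Measurable ℓ)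
    (hℓint : Integrable (fun ω => ℓ (ξ 0 ω)) μ)
    (hgap : ∀ z ∈ C, ENNReal.ofReal (∫ ω, ℓ (ξ 0 ω) ∂μ) <
      (⨆ t, ENNReal.ofReal (ρ t)) * μ {ω | g z (ξ 0 ω) ≠ 0}) :
    ∃ T : ℕ, ∀ᵐ ω ∂μ, ∀ᶠ n in atTop, ∀ t : ℝ, T ≤ t → ∀ p ∈ C,
      ∑ i ∈ Finset.range n, ℓ (ξ i ω) < ∑ i ∈ Finset.range n, ρ (r (ξ i ω) - t * g p (ξ i ω)) := by
  obtain ⟨D, hDC, hD, hCD⟩ := hC.isSeparable.exists_countable_dense_subset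
  have := hD.to_subtype
  choose! M hM k hk hMk using fun z hz => exists_lt_integral_localMinorant (D := D) hρ hg hr hDC hCD
    (hident 0).aemeasurable_fst (hcont.mono fun ω h => h 0) hz (hgap z hz)
  obtain ⟨Z, hZC, hCZ⟩ := hC.elim_nhds_subcover (fun z => Metric.ball z (k z : ℝ)⁻¹)
    fun z hz => Metric.ball_mem_nhds z (inv_pos.2 (Nat.cast_pos.2 (hk z hz)))
  have hlim := (ae_ball_iff Z.countable_toSet).2 fun z hz =>
    ae_tendsto_average_comp hiid hident
      (measurable_localMinorant (D := D) hρ.continuous hg hr (k z) z)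
      (integrable_localMinorant_comp (D := D) hρ (hM z (hZC z hz)).le hg hr
        (hident 0).aemeasurable_fst (k z) z)
  refine ⟨Z.sup k, ?_⟩
  filter_upwards [ae_tendsto_average_comp hiid hident hℓ hℓint, hlim, hcont]
    with ω hℓω hGω hcontω
  have hsum : ∀ᶠ n in atTop, ∀ z ∈ Z, ∑ i ∈ Finset.range n, ℓ (ξ i ω) <
      ∑ i ∈ Finset.range n, localMinorant ρ (M z) g r D (k z) z (ξ i ω) := by
    refine (eventually_all_finset Z).2 fun z hz => ?_
    filter_upwards [hℓω.eventually_lt (hGω z hz) (hMk z (hZC z hz)), eventually_gt_atTop 0]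
      with n hn hn0
    exact (div_lt_div_iff_of_pos_right (Nat.cast_pos.2 hn0)).1 hn
  filter_upwards [hsum] with n hn t hTt p hp
  obtain ⟨z, hz, hpz⟩ := Set.mem_iUnion₂.1 (hCZ hp)
  refine (hn z hz).trans_le (Finset.sum_le_sum fun i _ => ?_)
  have hkt : (k z : ℝ) ≤ t := le_trans (Nat.cast_le.2 (Finset.le_sup hz)) hTt
  exact (localMinorant_le_lossMinorant hρ (hM z (hZC z hz)).le hDC hCD (hcontω i) hp hpz).trans
    (lossMinorant_le_rho hρ hkt _ _)

end Consistency

theorem M_estimate_beta_ultimately_bounded_general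
    {Ω : Type*} [MeasurableSpace Ω] (μ : Measure Ω) [IsProbabilityMeasure μ]
    (q p₁ p₂ : ℕ)
    (A : Set (EuclideanSpace ℝ (Fin p₁))) (B : Set (EuclideanSpace ℝ (Fin p₂)))
    (hAcompact : IsCompact A)
    (α₀ : EuclideanSpace ℝ (Fin p₁)) (β₀ : EuclideanSpace ℝ (Fin p₂))
    (hα₀ : α₀ ∈ A) (hβ₀ : β₀ ∈ B)
    (h : EuclideanSpace ℝ (Fin q) → EuclideanSpace ℝ (Fin p₁) →
      EuclideanSpace ℝ (Fin p₂))
    (hh : Measurable (Function.uncurry h))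
    -- the data: i.i.d. pairs `(x_i, e_i)` with `x_i` independent of `e_i`
    (x : ℕ → Ω → EuclideanSpace ℝ (Fin q)) (e : ℕ → Ω → ℝ)
    (hiid : iIndepFun (fun i ω => (x i ω, e i ω)) μ)
    (hident : ∀ i, IdentDistrib (fun ω => (x i ω, e i ω))
      (fun ω => (x 0 ω, e 0 ω)) μ μ)
    (y : ℕ → Ω → ℝ) (hy : ∀ i ω, y i ω = ⟪β₀, h (x i ω) α₀⟫ + e i ω)
    -- the loss function
    (ρ : ℝ → ℝ) (hρ : IsRhoFunction ρ)
    -- the M-estimates: measurable minimizers of the empirical loss on `A × B`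
    (αhat : ℕ → Ω → EuclideanSpace ℝ (Fin p₁))
    (βhat : ℕ → Ω → EuclideanSpace ℝ (Fin p₂))
    (hαhatmem : ∀ n ω, αhat n ω ∈ A) (hβhatmem : ∀ n ω, βhat n ω ∈ B)
    (hargmin : ∀ (n : ℕ) (ω : Ω), ∀ α ∈ A, ∀ β ∈ B,
      (1 / (n : ℝ)) * ∑ i ∈ Finset.range n,
          ρ (y i ω - ⟪βhat n ω, h (x i ω) (αhat n ω)⟫) ≤
        (1 / (n : ℝ)) * ∑ i ∈ Finset.range n, ρ (y i ω - ⟪β, h (x i ω) α⟫))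
    -- (A): `B` is a closed cone
    (hBclosed : IsClosed B) (hBcone : ∀ β ∈ B, ∀ t : ℝ, 0 < t → t • β ∈ B)
    -- (B): `sup_{α∈A} E|ρ(y − βᵀh(x,α))| < ∞` for all `β ∈ B`
    (hB : ∀ β ∈ B,
      (⨆ α ∈ A, ∫⁻ ω, ENNReal.ofReal (ρ (y 0 ω - ⟪β, h (x 0 ω) α⟫)) ∂μ) < ⊤)
    -- (C): `t ↦ Eρ(e − t)` has a unique minimum at `t = 0`
    (hC : ∀ t : ℝ, t ≠ 0 →
      ∫⁻ ω, ENNReal.ofReal (ρ (e 0 ω)) ∂μ <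
        ∫⁻ ω, ENNReal.ofReal (ρ (e 0 ω - t)) ∂μ)
    -- (D): a.s. continuity in `α`, and identifiability
    (hDcont : ∀ᵐ ω ∂μ, ∀ i, ContinuousOn (fun a => h (x i ω) a) A)
    -- (E): `δ < 1 − λ₀/S` (read in `ℝ≥0∞`, so that for `S = ∞` it is `δ < 1`)
    (hE : (⨆ (β : EuclideanSpace ℝ (Fin p₂)) (_ : β ≠ 0) (α ∈ A),
        μ {ω | ⟪β, h (x 0 ω) α⟫ = 0}) <
      1 - (∫⁻ ω, ENNReal.ofReal (ρ (e 0 ω)) ∂μ) /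
        ⨆ t : ℝ, ENNReal.ofReal (ρ t)) :
    ∃ T₀ : ℝ, ∀ᵐ ω ∂μ, ∀ᶠ n in atTop, ‖βhat n ω‖ ≤ T₀ := by
  have hhx (α : EuclideanSpace ℝ (Fin p₁)) :
      Measurable fun a : EuclideanSpace ℝ (Fin q) × ℝ => h a.1 α :=
    hh.comp (measurable_fst.prodMk measurable_const)
  have he : Integrable (fun ω => ρ (e 0 ω)) μ := by
    refine ⟨(hρ.continuous.measurable.comp_aemeasurable
      (hident 0).aemeasurable_fst.snd).aestronglyMeasurable, ?_⟩
    rw [hasFiniteIntegral_iff_ofReal (ae_of_all _ fun _ => hρ.nonneg _)]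
    refine (le_iSup₂_of_le α₀ hα₀ ?_).trans_lt (hB β₀ hβ₀)
    simp only [hy, add_sub_cancel_left, le_refl]
  rw [← ofReal_integral_eq_lintegral_ofReal he (ae_of_all _ fun _ => hρ.nonneg _)] at hE
  obtain ⟨T, hT⟩ := exists_forall_sum_lt_sum_rho (ξ := fun i ω => (x i ω, e i ω))
    (g := fun w a => ⟪w.1, h a.1 w.2⟫) (r := fun a => ⟪β₀, h a.1 α₀⟫ + a.2) (ℓ := fun a => ρ a.2)
    hiid hident hρ (((isCompact_sphere 0 1).inter_left hBclosed).prod hAcompact)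
    (fun w => measurable_const.inner (hhx w.2))
    ((measurable_const.inner (hhx α₀)).add measurable_snd)
    (hDcont.mono fun ω hω i =>
      continuousOn_fst.inner ((hω i).comp continuousOn_snd fun w hw => hw.2))
    (hρ.continuous.measurable.comp measurable_snd) he
    fun z ⟨⟨_, hz⟩, hzA⟩ => lt_mul_measure_compl_of_le ENNReal.ofReal_ne_top
      (iSup_ofReal_ne_zero_of_lintegral_lt (hC 1 one_ne_zero)) hE
      (le_iSup₂_of_le z.1 (fun h0 => by simp [h0] at hz) (le_iSup₂_of_le z.2 hzA le_rfl))
  refine ⟨T, hT.mono fun ω hω => (hω.and (eventually_gt_atTop 0)).mono fun n ⟨hn, hn0⟩ => ?_⟩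
  by_contra! hTβ
  have hβ : 0 < ‖βhat n ω‖ := (Nat.cast_nonneg T).trans_lt hTβ
  have hlt := hn ‖βhat n ω‖ hTβ.le (‖βhat n ω‖⁻¹ • βhat n ω, αhat n ω)
    ⟨⟨hBcone _ (hβhatmem n ω) _ (inv_pos.2 hβ), by simp [norm_smul, hβ.ne']⟩, hαhatmem n ω⟩
  have harg := hargmin n ω α₀ hα₀ β₀ hβ₀
  simp only [hy, real_inner_smul_left, mul_inv_cancel_left₀ hβ.ne', add_sub_cancel_left] at hlt harg
  exact harg.not_gt ((mul_lt_mul_iff_right₀ (by positivity)).2 hlt)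

/-- **Lemma.** In the separable nonlinear regression model
`y_i = β₀ᵀ h(x_i, α₀) + e_i` with i.i.d. `(x_i, e_i)`, `x_i` independent of
`e_i`, with `A` compact and under assumptions (A)–(E), the norms `‖β̂_n‖` of
the M-estimates are ultimately bounded with probability one. -/
theorem M_estimate_beta_ultimately_bounded
    {Ω : Type*} [MeasurableSpace Ω] (μ : Measure Ω) [IsProbabilityMeasure μ]
    (q p₁ p₂ : ℕ)
    (A : Set (EuclideanSpace ℝ (Fin p₁))) (B : Set (EuclideanSpace ℝ (Fin p₂)))
    (hAcompact : IsCompact A)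
    (α₀ : EuclideanSpace ℝ (Fin p₁)) (β₀ : EuclideanSpace ℝ (Fin p₂))
    (hα₀ : α₀ ∈ A) (hβ₀ : β₀ ∈ B)
    (h : EuclideanSpace ℝ (Fin q) → EuclideanSpace ℝ (Fin p₁) →
      EuclideanSpace ℝ (Fin p₂))
    (hh : Measurable (Function.uncurry h))
    -- the data: i.i.d. pairs `(x_i, e_i)` with `x_i` independent of `e_i`
    (x : ℕ → Ω → EuclideanSpace ℝ (Fin q)) (e : ℕ → Ω → ℝ)
    (hx : ∀ i, Measurable (x i)) (he : ∀ i, Measurable (e i))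
    (hiid : iIndepFun (fun i ω => (x i ω, e i ω)) μ)
    (hident : ∀ i, IdentDistrib (fun ω => (x i ω, e i ω))
      (fun ω => (x 0 ω, e 0 ω)) μ μ)
    (hxe : ∀ i, IndepFun (x i) (e i) μ)
    (y : ℕ → Ω → ℝ) (hy : ∀ i ω, y i ω = ⟪β₀, h (x i ω) α₀⟫ + e i ω)
    -- the loss function
    (ρ : ℝ → ℝ) (hρ : IsRhoFunction ρ)
    -- the M-estimates: measurable minimizers of the empirical loss on `A × B`
    (αhat : ℕ → Ω → EuclideanSpace ℝ (Fin p₁))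
    (βhat : ℕ → Ω → EuclideanSpace ℝ (Fin p₂))
    (hαhatmeas : ∀ n, Measurable (αhat n))
    (hβhatmeas : ∀ n, Measurable (βhat n))
    (hαhatmem : ∀ n ω, αhat n ω ∈ A) (hβhatmem : ∀ n ω, βhat n ω ∈ B)
    (hargmin : ∀ (n : ℕ) (ω : Ω), ∀ α ∈ A, ∀ β ∈ B,
      (1 / (n : ℝ)) * ∑ i ∈ Finset.range n,
          ρ (y i ω - ⟪βhat n ω, h (x i ω) (αhat n ω)⟫) ≤
        (1 / (n : ℝ)) * ∑ i ∈ Finset.range n, ρ (y i ω - ⟪β, h (x i ω) α⟫))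
    -- (A): `B` is a closed cone
    (hBclosed : IsClosed B) (hBcone : ∀ β ∈ B, ∀ t : ℝ, 0 < t → t • β ∈ B)
    -- (B): `sup_{α∈A} E|ρ(y − βᵀh(x,α))| < ∞` for all `β ∈ B`
    (hB : ∀ β ∈ B,
      (⨆ α ∈ A, ∫⁻ ω, ENNReal.ofReal (ρ (y 0 ω - ⟪β, h (x 0 ω) α⟫)) ∂μ) < ⊤)
    -- (C): `t ↦ Eρ(e − t)` has a unique minimum at `t = 0`
    (hC : ∀ t : ℝ, t ≠ 0 →
      ∫⁻ ω, ENNReal.ofReal (ρ (e 0 ω)) ∂μ <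
        ∫⁻ ω, ENNReal.ofReal (ρ (e 0 ω - t)) ∂μ)
    -- (D): a.s. continuity in `α`, and identifiability
    (hDcont : ∀ᵐ ω ∂μ, ∀ i, ContinuousOn (fun a => h (x i ω) a) A)
    (hDident : ∀ α ∈ A, α ≠ α₀ →
      (⨆ β ∈ B, μ {ω | ⟪β, h (x 0 ω) α⟫ = ⟪β₀, h (x 0 ω) α₀⟫}) < 1)
    -- (E): `δ < 1 − λ₀/S` (read in `ℝ≥0∞`, so that for `S = ∞` it is `δ < 1`)
    (hE : (⨆ (β : EuclideanSpace ℝ (Fin p₂)) (_ : β ≠ 0) (α ∈ A),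
        μ {ω | ⟪β, h (x 0 ω) α⟫ = 0}) <
      1 - (∫⁻ ω, ENNReal.ofReal (ρ (e 0 ω)) ∂μ) /
        ⨆ t : ℝ, ENNReal.ofReal (ρ t)) :
    ∃ T₀ : ℝ, ∀ᵐ ω ∂μ, ∀ᶠ n in atTop, ‖βhat n ω‖ ≤ T₀ :=
  M_estimate_beta_ultimately_bounded_general μ q p₁ p₂ A B hAcompact α₀ β₀ hα₀ hβ₀ h hh x e hiid
    hident y hy ρ hρ αhat βhat hαhatmem hβhatmem hargmin hBclosed hBcone hB hC hDcont hE
end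

section
/- Let ρ be a ρ-function, let e be a real random variable such that the function m(t) = E ρ(e − t) is finite for all t and has a unique minimum at t = 0, with λ₀ = Eρ(e). Let x be a random element independent of e, let y = β₀ᵀ h(x, α₀) + e, and define λ(α, β) = E ρ(y − βᵀ h(x, α)) (assumed finite). Then for any (α, β) such that P{βᵀ h(x, α) ≠ β₀ᵀ h(x, α₀)} > 0, one has λ(α, β) > λ₀ = λ(α₀, β₀). In particular, λ(α, β) attains its minimum over all (α, β) only when βᵀ h(x, α) = β₀ᵀ h(x, α₀) almost surely. -/
open MeasureTheory ProbabilityTheory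
open scoped RealInnerProductSpace

namespace MeasureTheory

theorem integral_map_eq_integral_comp_prodMk_left {Ω α β E : Type*} [MeasurableSpace Ω]
    [MeasurableSpace α] [MeasurableSpace β] [NormedAddCommGroup E] [NormedSpace ℝ E]
    {μ : Measure Ω} {Y : Ω → β} (hY : Measurable Y) {F : α × β → E} (hF : StronglyMeasurable F)
    (a : α) :
    ∫ b, F (a, b) ∂(μ.map Y) = ∫ ω, F (a, Y ω) ∂μ :=
  integral_map hY.aemeasurable (hF.comp_measurable measurable_prodMk_left).aestronglyMeasurable

theorem lt_integral_of_ae_le_of_measure_setOf_lt_ne_zero {α : Type*} [MeasurableSpace α]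
    {ν : Measure α} [IsProbabilityMeasure ν] {f : α → ℝ} {c : ℝ} (hf : Integrable f ν)
    (hle : ∀ᵐ a ∂ν, c ≤ f a) (hlt : ν {a | c < f a} ≠ 0) :
    c < ∫ a, f a ∂ν := by
  have hpos : 0 < ∫ a, (f a - c) ∂ν := by
    refine (integral_pos_iff_support_of_nonneg_ae ?_ (hf.sub (integrable_const c))).2 ?_
    · filter_upwards [hle] with a ha using sub_nonneg.2 ha
    · refine pos_iff_ne_zero.2 fun h => hlt (measure_mono_null (fun a ha => ?_) h)
      exact sub_ne_zero.2 (ne_of_gt ha)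
  rwa [integral_sub hf (integrable_const c), integral_const, probReal_univ, one_smul,
    sub_pos] at hpos

end MeasureTheory

namespace ProbabilityTheory

variable {Ω α β E : Type*} [MeasurableSpace Ω] [MeasurableSpace α] [MeasurableSpace β]
  [NormedAddCommGroup E] {μ : Measure Ω} [IsFiniteMeasure μ]
  {X : Ω → α} {Y : Ω → β} {F : α × β → E}

theorem IndepFun.integrable_prod_map_of_integrable_comp (hX : Measurable X) (hY : Measurable Y)
    (hXY : IndepFun X Y μ) (hF : StronglyMeasurable F)
    (hFi : Integrable (fun ω => F (X ω, Y ω)) μ) :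
    Integrable F ((μ.map X).prod (μ.map Y)) := by
  rw [← (indepFun_iff_map_prod_eq_prod_map_map hX.aemeasurable hY.aemeasurable).1 hXY]
  exact (integrable_map_measure hF.aestronglyMeasurable (hX.prodMk hY).aemeasurable).2 hFi

variable [NormedSpace ℝ E]

theorem IndepFun.integrable_integral_comp (hX : Measurable X) (hY : Measurable Y)
    (hXY : IndepFun X Y μ) (hF : StronglyMeasurable F)
    (hFi : Integrable (fun ω => F (X ω, Y ω)) μ) :
    Integrable (fun a => ∫ ω, F (a, Y ω) ∂μ) (μ.map X) := by
  simpa only [integral_map_eq_integral_comp_prodMk_left hY hF] using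
    (hXY.integrable_prod_map_of_integrable_comp hX hY hF hFi).integral_prod_left

theorem IndepFun.integral_comp_eq_integral_integral (hX : Measurable X) (hY : Measurable Y)
    (hXY : IndepFun X Y μ) (hF : StronglyMeasurable F)
    (hFi : Integrable (fun ω => F (X ω, Y ω)) μ) :
    ∫ ω, F (X ω, Y ω) ∂μ = ∫ a, ∫ ω, F (a, Y ω) ∂μ ∂(μ.map X) := by
  rw [← integral_map (hX.prodMk hY).aemeasurable hF.aestronglyMeasurable,
    (indepFun_iff_map_prod_eq_prod_map_map hX.aemeasurable hY.aemeasurable).1 hXY,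
    integral_prod F (hXY.integrable_prod_map_of_integrable_comp hX hY hF hFi)]
  simp only [integral_map_eq_integral_comp_prodMk_left hY hF]

end ProbabilityTheory

theorem expected_loss_strict_min_separable_general
    {Ω : Type*} [MeasurableSpace Ω] (μ : Measure Ω) [IsProbabilityMeasure μ]
    (q p₁ p₂ : ℕ)
    (ρ : ℝ → ℝ) (hρ : IsRhoFunction ρ)
    (e : Ω → ℝ) (he : Measurable e)
    (x : Ω → EuclideanSpace ℝ (Fin q)) (hx : Measurable x)
    (hxe : IndepFun x e μ)
    (h : EuclideanSpace ℝ (Fin q) → EuclideanSpace ℝ (Fin p₁) →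
      EuclideanSpace ℝ (Fin p₂))
    (hh : Measurable (Function.uncurry h))
    (α₀ : EuclideanSpace ℝ (Fin p₁)) (β₀ : EuclideanSpace ℝ (Fin p₂))
    (y : Ω → ℝ) (hy : ∀ ω, y ω = ⟪β₀, h (x ω) α₀⟫ + e ω)
    (hmmin : ∀ t : ℝ, t ≠ 0 → ∫ ω, ρ (e ω) ∂μ < ∫ ω, ρ (e ω - t) ∂μ) :
    ∀ (α : EuclideanSpace ℝ (Fin p₁)) (β : EuclideanSpace ℝ (Fin p₂)),
      Integrable (fun ω => ρ (y ω - ⟪β, h (x ω) α⟫)) μ →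
        (0 < μ {ω | ⟪β, h (x ω) α⟫ ≠ ⟪β₀, h (x ω) α₀⟫} →
          ∫ ω, ρ (e ω) ∂μ < ∫ ω, ρ (y ω - ⟪β, h (x ω) α⟫) ∂μ) ∧
        ((∫ ω, ρ (y ω - ⟪β, h (x ω) α⟫) ∂μ ≤ ∫ ω, ρ (e ω) ∂μ) →
          ∀ᵐ ω ∂μ, ⟪β, h (x ω) α⟫ = ⟪β₀, h (x ω) α₀⟫) := by
  intro α β hint
  set g : EuclideanSpace ℝ (Fin q) → ℝ := fun v => ⟪β, h v α⟫ - ⟪β₀, h v α₀⟫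
  have hg : Measurable g :=
    (measurable_const.inner hh.of_uncurry_right).sub (measurable_const.inner hh.of_uncurry_right)
  have hresid : ∀ ω, y ω - ⟪β, h (x ω) α⟫ = e ω - g (x ω) := fun ω => by rw [hy]; ring
  simp only [hresid] at hint ⊢
  have hF : StronglyMeasurable fun p : EuclideanSpace ℝ (Fin q) × ℝ => ρ (p.2 - g p.1) :=
    (hρ.1.measurable.comp (measurable_snd.sub (hg.comp measurable_fst))).stronglyMeasurable
  have hloss : ∫ ω, ρ (e ω - g (x ω)) ∂μ = ∫ v, ∫ ω, ρ (e ω - g v) ∂μ ∂(μ.map x) :=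
    hxe.integral_comp_eq_integral_integral hx he hF hint
  have hm_ge : ∀ t, ∫ ω, ρ (e ω) ∂μ ≤ ∫ ω, ρ (e ω - t) ∂μ := fun t => by
    rcases eq_or_ne t 0 with rfl | ht
    · simp
    · exact (hmmin t ht).le
  have key : 0 < μ {ω | ⟪β, h (x ω) α⟫ ≠ ⟪β₀, h (x ω) α₀⟫} →
      ∫ ω, ρ (e ω) ∂μ < ∫ ω, ρ (e ω - g (x ω)) ∂μ := by
    intro hpos
    have hmeas_ne : MeasurableSet {v | g v ≠ 0} := (hg (measurableSet_singleton 0)).compl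
    have hlaw_ne : μ.map x {v | g v ≠ 0} ≠ 0 := by
      rw [Measure.map_apply hx hmeas_ne]
      simpa only [Set.preimage_ofPred_eq, g, sub_ne_zero] using hpos.ne'
    have : IsProbabilityMeasure (μ.map x) := Measure.isProbabilityMeasure_map hx.aemeasurable
    rw [hloss]
    refine lt_integral_of_ae_le_of_measure_setOf_lt_ne_zero ?_ (.of_forall fun v => hm_ge _)
      fun h0 => hlaw_ne (measure_mono_null (fun v hv => hmmin _ hv) h0)
    exact hxe.integrable_integral_comp hx he hF hint
  exact ⟨key, fun hle => ae_iff.2 (by_contra fun hne => (key (pos_iff_ne_zero.2 hne)).not_ge hle)⟩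

/-- Let `ρ` be a ρ-function and `e` a real random variable
such that `t ↦ E ρ(e − t)` is finite for all `t` and has a unique minimum at
`t = 0`, with `λ₀ = E ρ(e)`.  Let `x` be independent of `e`, let
`y = β₀ᵀ h(x, α₀) + e` and `λ(α, β) = E ρ(y − βᵀ h(x, α))` (assumed finite).
Then whenever `P{βᵀh(x,α) ≠ β₀ᵀh(x,α₀)} > 0` one has `λ(α,β) > λ₀ = λ(α₀,β₀)`;
in particular `λ` attains its minimum only when `βᵀh(x,α) = β₀ᵀh(x,α₀)` a.s. -/
theorem expected_loss_strict_min_separable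
    {Ω : Type*} [MeasurableSpace Ω] (μ : Measure Ω) [IsProbabilityMeasure μ]
    (q p₁ p₂ : ℕ)
    (ρ : ℝ → ℝ) (hρ : IsRhoFunction ρ)
    (e : Ω → ℝ) (he : Measurable e)
    (x : Ω → EuclideanSpace ℝ (Fin q)) (hx : Measurable x)
    (hxe : IndepFun x e μ)
    (h : EuclideanSpace ℝ (Fin q) → EuclideanSpace ℝ (Fin p₁) →
      EuclideanSpace ℝ (Fin p₂))
    (hh : Measurable (Function.uncurry h))
    (α₀ : EuclideanSpace ℝ (Fin p₁)) (β₀ : EuclideanSpace ℝ (Fin p₂))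
    (y : Ω → ℝ) (hy : ∀ ω, y ω = ⟪β₀, h (x ω) α₀⟫ + e ω)
    (hmfin : ∀ t : ℝ, Integrable (fun ω => ρ (e ω - t)) μ)
    (hmmin : ∀ t : ℝ, t ≠ 0 → ∫ ω, ρ (e ω) ∂μ < ∫ ω, ρ (e ω - t) ∂μ) :
    ∀ (α : EuclideanSpace ℝ (Fin p₁)) (β : EuclideanSpace ℝ (Fin p₂)),
      Integrable (fun ω => ρ (y ω - ⟪β, h (x ω) α⟫)) μ →
        (0 < μ {ω | ⟪β, h (x ω) α⟫ ≠ ⟪β₀, h (x ω) α₀⟫} →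
          ∫ ω, ρ (e ω) ∂μ < ∫ ω, ρ (y ω - ⟪β, h (x ω) α⟫) ∂μ) ∧
        ((∫ ω, ρ (y ω - ⟪β, h (x ω) α⟫) ∂μ ≤ ∫ ω, ρ (e ω) ∂μ) →
          ∀ᵐ ω ∂μ, ⟪β, h (x ω) α⟫ = ⟪β₀, h (x ω) α₀⟫) :=
  expected_loss_strict_min_separable_general μ q p₁ p₂ ρ hρ e he x hx hxe h hh α₀ β₀ y hy hmmin
end

section
/- Let ρ be a ρ-function that is not identically zero, and let e be a real random variable whose distribution has an even density f(u) that is nonincreasing for u ≥ 0 and strictly decreasing in a neighborhood of u = 0. Assume E ρ(e − t) is finite for every t ∈ ℝ. Then the function t ↦ E ρ(e − t) has a unique minimum at t = 0. -/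
/-!
Write `R(t) = ∫ ρ(u - t) f(u) du`. Substituting `u = w ± s` and using the evenness of `ρ` and `f`,
`2 (R(2s) - R(0)) = ∫ (ρ(w + s) - ρ(w - s)) (f(w - s) - f(w + s)) dw`.
Since `ρ` increases and `f` decreases in `|·|`, the two factors have the same sign, so the integrand
is nonnegative. For `w` slightly above `|s|` the point `w - |s|` lies close to `0`, where `ρ` is
strictly below its supremum and `f` is strictly decreasing, so the integrand is positive there.
-/

open MeasureTheory

open Set Filter Topology

theorem integral_comp_eq_integral_mul_of_map_eq_withDensity {Ω α : Type*} [MeasurableSpace Ω]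
    [MeasurableSpace α] {μ : Measure Ω} {ν : Measure α} {e : Ω → α} (he : AEMeasurable e μ)
    {f : α → ℝ} (hf : Measurable f) (hf0 : ∀ u, 0 ≤ f u)
    (hdens : μ.map e = ν.withDensity fun u => ENNReal.ofReal (f u))
    {g : α → ℝ} (hg : AEStronglyMeasurable g (μ.map e)) :
    ∫ ω, g (e ω) ∂μ = ∫ u, g u * f u ∂ν := by
  rw [← integral_map he hg, hdens, integral_withDensity_eq_integral_toReal_smul
    hf.ennreal_ofReal (ae_of_all _ fun _ => ENNReal.ofReal_lt_top)]
  simp only [ENNReal.toReal_ofReal (hf0 _), smul_eq_mul, mul_comm]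

theorem integrable_mul_of_map_eq_withDensity {Ω α : Type*} [MeasurableSpace Ω]
    [MeasurableSpace α] {μ : Measure Ω} {ν : Measure α} {e : Ω → α} (he : AEMeasurable e μ)
    {f : α → ℝ} (hf : Measurable f) (hf0 : ∀ u, 0 ≤ f u)
    (hdens : μ.map e = ν.withDensity fun u => ENNReal.ofReal (f u))
    {g : α → ℝ} (hg : AEStronglyMeasurable g (μ.map e)) (hint : Integrable (fun ω => g (e ω)) μ) :
    Integrable (fun u => g u * f u) ν := by
  have h := (integrable_map_measure hg he).2 hint
  rw [hdens, integrable_withDensity_iff hf.ennreal_ofReal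
    (ae_of_all _ fun _ => ENNReal.ofReal_lt_top)] at h
  simpa only [ENNReal.toReal_ofReal (hf0 _)] using h

theorem Function.Even.apply_abs {α β : Type*} [AddGroup α] [LinearOrder α] {f : α → β}
    (hf : f.Even) (x : α) : f |x| = f x := by
  rcases abs_choice x with h | h <;> simp only [h, hf x]

theorem IsRhoFunction.eventually_lt_s10 {ρ : ℝ → ℝ} (hρ : IsRhoFunction ρ) (hne : ∃ u, ρ u ≠ 0) :
    ∀ᶠ a in 𝓝[≥] 0, ∀ b, a < b → ρ a < ρ b := by
  obtain ⟨hc, hnn, -, h0, -, hstr⟩ := hρ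
  obtain ⟨u, hu⟩ := hne
  have hu_pos : ρ 0 < ρ u := by rw [h0]; exact (hnn u).lt_of_ne' hu
  filter_upwards [nhdsWithin_le_nhds (hc.continuousAt.eventually (gt_mem_nhds hu_pos)),
    self_mem_nhdsWithin] with a hau ha b hab using hstr a b ha hab ⟨u, hau⟩

theorem AntitoneOn.eventually_lt_of_strictAntiOn_Icc {α β : Type*} [TopologicalSpace α]
    [LinearOrder α] [OrderTopology α] [Preorder β] {f : α → β} {c : α} (hf : AntitoneOn f (Ici c))
    (hstrict : ∃ ε > c, StrictAntiOn f (Icc c ε)) :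
    ∀ᶠ a in 𝓝[≥] c, ∀ b, a < b → f b < f a := by
  obtain ⟨ε, hcε, hε⟩ := hstrict
  filter_upwards [Ico_mem_nhdsGE hcε] with a ⟨hca, haε⟩ b hab
  rcases le_or_gt b ε with hbε | hεb
  · exact hε ⟨hca, haε.le⟩ ⟨hca.trans hab.le, hbε⟩ hab
  · calc f b ≤ f ε := hf (mem_Ici.2 hcε.le) (mem_Ici.2 (hca.trans hab.le)) hεb.le
      _ < f a := hε ⟨hca, haε.le⟩ ⟨hcε.le, le_rfl⟩ haε

def shiftGap (ρ f : ℝ → ℝ) (s w : ℝ) : ℝ :=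
  (ρ (w + s) - ρ (w - s)) * (f (w - s) - f (w + s))

section shiftGap

variable {ρ f : ℝ → ℝ}

theorem shiftGap_neg (s : ℝ) : shiftGap ρ f (-s) = shiftGap ρ f s := by
  funext w
  simp only [shiftGap, sub_neg_eq_add, ← sub_eq_add_neg]
  ring

theorem shiftGap_nonneg (hρ : ρ.Even) (hρm : MonotoneOn ρ (Ici 0)) (hf : f.Even)
    (hfm : AntitoneOn f (Ici 0)) (s w : ℝ) : 0 ≤ shiftGap ρ f s w := by
  rw [shiftGap, ← hρ.apply_abs, ← hρ.apply_abs (w - s), ← hf.apply_abs, ← hf.apply_abs (w + s)]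
  have h₀ : ∀ x : ℝ, |x| ∈ Ici 0 := fun x => abs_nonneg x
  rcases le_total |w - s| |w + s| with h | h
  · exact mul_nonneg (sub_nonneg.2 (hρm (h₀ _) (h₀ _) h)) (sub_nonneg.2 (hfm (h₀ _) (h₀ _) h))
  · exact mul_nonneg_of_nonpos_of_nonpos (sub_nonpos.2 (hρm (h₀ _) (h₀ _) h))
      (sub_nonpos.2 (hfm (h₀ _) (h₀ _) h))

/-- Each term is a translate or reflection of `u ↦ ρ (u - 2 * s) * f u` or `u ↦ ρ u * f u`. -/
theorem shiftGap_eq_translates (hρ : ρ.Even) (hf : f.Even) (s : ℝ) :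
    shiftGap ρ f s = fun w => ρ (s - w - 2 * s) * f (s - w) + ρ (w + s - 2 * s) * f (w + s)
      - ρ (w + s) * f (w + s) - ρ (w - s) * f (w - s) := by
  funext w
  rw [shiftGap, show s - w - 2 * s = -(w + s) by ring, show s - w = -(w - s) by ring,
    show w + s - 2 * s = w - s by ring, hρ, hf]
  ring

theorem integrable_shiftGap (hρ : ρ.Even) (hf : f.Even) {s : ℝ}
    (h₀ : Integrable fun u => ρ u * f u) (h₁ : Integrable fun u => ρ (u - 2 * s) * f u) :
    Integrable (shiftGap ρ f s) := by
  rw [shiftGap_eq_translates hρ hf]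
  exact (((h₁.comp_sub_left s).add (h₁.comp_add_right s)).sub (h₀.comp_add_right s)).sub
    (h₀.comp_sub_right s)

theorem integral_shiftGap (hρ : ρ.Even) (hf : f.Even) {s : ℝ}
    (h₀ : Integrable fun u => ρ u * f u) (h₁ : Integrable fun u => ρ (u - 2 * s) * f u) :
    ∫ w, shiftGap ρ f s w = 2 * ((∫ u, ρ (u - 2 * s) * f u) - ∫ u, ρ u * f u) := by
  have i₁ : Integrable fun w => ρ (s - w - 2 * s) * f (s - w) := h₁.comp_sub_left s
  have i₂ : Integrable fun w => ρ (w + s - 2 * s) * f (w + s) := h₁.comp_add_right s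
  simp only [shiftGap_eq_translates hρ hf]
  rw [integral_sub ?_ (h₀.comp_sub_right s), integral_sub ?_ (h₀.comp_add_right s),
    integral_add i₁ i₂, integral_sub_left_eq_self (fun u => ρ (u - 2 * s) * f u),
    integral_add_right_eq_self (fun u => ρ (u - 2 * s) * f u),
    integral_add_right_eq_self (fun u => ρ u * f u), integral_sub_right_eq_self (fun u => ρ u * f u)]
  · ring
  · exact i₁.add i₂
  · exact (i₁.add i₂).sub (h₀.comp_add_right s)

theorem integral_shiftGap_pos (hρ : ρ.Even) (hρm : MonotoneOn ρ (Ici 0)) (hf : f.Even)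
    (hfm : AntitoneOn f (Ici 0)) (hρlt : ∀ᶠ a in 𝓝[≥] 0, ∀ b, a < b → ρ a < ρ b)
    (hflt : ∀ᶠ a in 𝓝[≥] 0, ∀ b, a < b → f b < f a) {s : ℝ} (hs : s ≠ 0)
    (hint : Integrable (shiftGap ρ f s)) : 0 < ∫ w, shiftGap ρ f s w := by
  wlog hs_pos : 0 < s generalizing s
  · rw [← shiftGap_neg] at hint ⊢
    exact this (neg_ne_zero.2 hs) hint (neg_pos.2 (hs.lt_of_le (not_lt.1 hs_pos)))
  obtain ⟨δ, hδ, hδlt⟩ := mem_nhdsGE_iff_exists_Ico_subset.1 (hρlt.and hflt)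
  rw [integral_pos_iff_support_of_nonneg (shiftGap_nonneg hρ hρm hf hfm s) hint]
  have hvol : 0 < volume (Ioo s (s + δ)) := by simpa [Real.volume_Ioo] using hδ
  refine hvol.trans_le (measure_mono fun w ⟨hsw, hwδ⟩ => ?_)
  obtain ⟨hρw, hfw⟩ := hδlt ⟨sub_nonneg.2 hsw.le, by linarith⟩
  exact (mul_pos (sub_pos.2 (hρw _ (by linarith))) (sub_pos.2 (hfw _ (by linarith)))).ne'

end shiftGap

theorem symmetric_unimodal_expected_loss_unique_min_general
    {Ω : Type*} [MeasurableSpace Ω] (μ : Measure Ω)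
    (ρ : ℝ → ℝ) (hρ : IsRhoFunction ρ) (hρne : ∃ u, ρ u ≠ 0)
    (e : Ω → ℝ) (he : Measurable e)
    (f : ℝ → ℝ) (hf : Measurable f) (hf0 : ∀ u, 0 ≤ f u)
    (hfeven : ∀ u, f (-u) = f u)
    (hfmono : AntitoneOn f (Set.Ici 0))
    (hfstrict : ∃ ε > (0 : ℝ), StrictAntiOn f (Set.Icc 0 ε))
    (hdens : Measure.map e μ =
      MeasureTheory.volume.withDensity (fun u => ENNReal.ofReal (f u)))
    (hint : ∀ t : ℝ, Integrable (fun ω => ρ (e ω - t)) μ) :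
    ∀ t : ℝ, t ≠ 0 → ∫ ω, ρ (e ω) ∂μ < ∫ ω, ρ (e ω - t) ∂μ := by
  have hρlt := hρ.eventually_lt_s10 hρne
  obtain ⟨hc, -, hρeven, -, hρmono, -⟩ := hρ
  have hmeas (t : ℝ) : AEStronglyMeasurable (fun u => ρ (u - t)) (μ.map e) :=
    (hc.comp (continuous_sub_right t)).aestronglyMeasurable
  have hloss (t : ℝ) : ∫ ω, ρ (e ω - t) ∂μ = ∫ u, ρ (u - t) * f u :=
    integral_comp_eq_integral_mul_of_map_eq_withDensity he.aemeasurable hf hf0 hdens (hmeas t)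
  have hloss_int (t : ℝ) : Integrable fun u => ρ (u - t) * f u :=
    integrable_mul_of_map_eq_withDensity he.aemeasurable hf hf0 hdens (hmeas t) (hint t)
  have h₀ : Integrable fun u => ρ u * f u := by simpa using hloss_int 0
  intro t ht
  obtain ⟨s, rfl⟩ : ∃ s, t = 2 * s := ⟨t / 2, by ring⟩
  have hgap := integral_shiftGap_pos hρeven hρmono hfeven hfmono hρlt
    (hfmono.eventually_lt_of_strictAntiOn_Icc hfstrict) (right_ne_zero_of_mul ht)
    (integrable_shiftGap hρeven hfeven h₀ (hloss_int _))
  rw [integral_shiftGap hρeven hfeven h₀ (hloss_int _)] at hgap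
  have hloss₀ : ∫ ω, ρ (e ω) ∂μ = ∫ u, ρ u * f u := by simpa using hloss 0
  rw [hloss₀, hloss]
  linarith

/-- **Lemma 3.1 of Yohai, 1987.** Let `ρ` be a ρ-function that
is not identically zero, and let `e` be a real random variable whose law has an
even density `f` that is nonincreasing for `u ≥ 0` and strictly decreasing in a
neighborhood of `0`. If `E ρ(e − t)` is finite for every `t`, then
`t ↦ E ρ(e − t)` has a unique minimum at `t = 0`. -/
theorem symmetric_unimodal_expected_loss_unique_min
    {Ω : Type*} [MeasurableSpace Ω] (μ : Measure Ω) [IsProbabilityMeasure μ]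
    (ρ : ℝ → ℝ) (hρ : IsRhoFunction ρ) (hρne : ∃ u, ρ u ≠ 0)
    (e : Ω → ℝ) (he : Measurable e)
    (f : ℝ → ℝ) (hf : Measurable f) (hf0 : ∀ u, 0 ≤ f u)
    (hfeven : ∀ u, f (-u) = f u)
    (hfmono : AntitoneOn f (Set.Ici 0))
    (hfstrict : ∃ ε > (0 : ℝ), StrictAntiOn f (Set.Icc 0 ε))
    (hdens : Measure.map e μ =
      MeasureTheory.volume.withDensity (fun u => ENNReal.ofReal (f u)))
    (hint : ∀ t : ℝ, Integrable (fun ω => ρ (e ω - t)) μ) :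
    ∀ t : ℝ, t ≠ 0 → ∫ ω, ρ (e ω) ∂μ < ∫ ω, ρ (e ω - t) ∂μ :=
  symmetric_unimodal_expected_loss_unique_min_general μ ρ hρ hρne e he f hf hf0 hfeven hfmono
    hfstrict hdens hint
end
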